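/- Let 0 < λ < 1 and x ∈ ℝᵈ, and let s_x ∈ S be a segment achieving the minimum of dist(x, s) over s ∈ S. Then for every z ∈ C^λ(x, φ(x)) and every segment s_z ∈ S achieving the minimum of dist(z, s) over s ∈ S, it holds that dist(z, s_x) ≤ ((1+λ)/(1−λ))·dist(z, s_z). -/

import Mathlib

noncomputable section

open Metric Set MeasureTheory
open scoped InnerProductSpace Classical

variable {d n : ℕ}

/-- The capsule `C_s(x,r)` induced by a single segment `s = [a,b]` with unit
direction vector `v`.  If the nearest point of `s` to `x` is an endpoint, it is
the closed ball of radius `max r (dist x s)`; otherwise it is the intersection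
of the infinite closed cylinder of radius `max r (dist x s)` whose axis is the
line through `x` parallel to `v` with the closed ball of radius
`max r (min ‖x-a‖ ‖x-b‖)`. -/
def capsuleSeg (a b v x : EuclideanSpace ℝ (Fin d)) (r : ℝ) :
    Set (EuclideanSpace ℝ (Fin d)) :=
  if Metric.infDist x (segment ℝ a b) = min (dist x a) (dist x b) then
    Metric.closedBall x (max r (Metric.infDist x (segment ℝ a b)))
  else
    {y | ‖(y - x) - ⟪y - x, v⟫_ℝ • v‖ ≤ max r (Metric.infDist x (segment ℝ a b))} ∩
      Metric.closedBall x (max r (min (dist x a) (dist x b)))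

/-- The capsule `C(x,r)` of the family of segments `s i = [a i, b i]`. -/
def capsuleFam (a b v : Fin n → EuclideanSpace ℝ (Fin d))
    (x : EuclideanSpace ℝ (Fin d)) (r : ℝ) : Set (EuclideanSpace ℝ (Fin d)) :=
  ⋂ i, capsuleSeg (a i) (b i) (v i) x r

/-- Image of a set under the homothety (central scaling) centered at `x` with ratio `lam`. -/
def scaleAbout (x : EuclideanSpace ℝ (Fin d)) (lam : ℝ)
    (C : Set (EuclideanSpace ℝ (Fin d))) : Set (EuclideanSpace ℝ (Fin d)) :=
  (AffineMap.homothety x lam) '' C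

/-- Local feature size: the distance from `x` to its second-nearest segment. -/
def lfs (a b : Fin n → EuclideanSpace ℝ (Fin d)) (x : EuclideanSpace ℝ (Fin d)) : ℝ :=
  sInf {t | ∃ i j : Fin n, i < j ∧
    t = max (Metric.infDist x (segment ℝ (a i) (b i)))
            (Metric.infDist x (segment ℝ (a j) (b j)))}

/-- `D_i(x)`: half the squared distance from `x` to the segment `[a,b]`. -/
def Dseg (a b x : EuclideanSpace ℝ (Fin d)) : ℝ :=
  Metric.infDist x (segment ℝ a b) ^ 2 / 2

/-- `D•_i(x)`: half the squared distance from `x` to the nearest endpoint. -/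
def Dbullet (a b x : EuclideanSpace ℝ (Fin d)) : ℝ :=
  min (dist x a ^ 2) (dist x b ^ 2) / 2

/-- The quadratic form `w ↦ wᵀ H_i(x) w` of the local tensor
`H_i(x) = (1/D_i(x))(I - v vᵀ) + (1/D•_i(x)) v vᵀ`. -/
def tensorQ (a b v x w : EuclideanSpace ℝ (Fin d)) : ℝ :=
  (1 / Dseg a b x) * (‖w‖ ^ 2 - ⟪w, v⟫_ℝ ^ 2) + (1 / Dbullet a b x) * ⟪w, v⟫_ℝ ^ 2

/-- The local ellipsoid `E_i(x) = {y | ½ (y-x)ᵀ H_i(x) (y-x) ≤ 1}`. -/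
def localEllipsoid (a b v x : EuclideanSpace ℝ (Fin d)) :
    Set (EuclideanSpace ℝ (Fin d)) :=
  {y | tensorQ a b v x (y - x) / 2 ≤ 1}

/-- `Ê(x)`: the intersection of the local ellipsoids of all segments. -/
def hatE (a b v : Fin n → EuclideanSpace ℝ (Fin d)) (x : EuclideanSpace ℝ (Fin d)) :
    Set (EuclideanSpace ℝ (Fin d)) :=
  ⋂ i, localEllipsoid (a i) (b i) (v i) x

/-- `Ẽ(x)`: the ellipsoid of the blended tensor `H(x) = ∑ i, H_i(x)`. -/
def tildeE (a b v : Fin n → EuclideanSpace ℝ (Fin d)) (x : EuclideanSpace ℝ (Fin d)) :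
    Set (EuclideanSpace ℝ (Fin d)) :=
  {y | (∑ i, tensorQ (a i) (b i) (v i) x (y - x)) / 2 ≤ 1}

/-!
Let `φ = lfs a b x`, so that `dist(x, s_x) ≤ φ ≤ dist(x, s)` for every other segment `s`.
For each segment the capsule bounds how far `z` can move away from `x`, up to the factor `λ`:
in every direction when the capsule is a ball, and across the axis of the segment when it is
a cylinder, where `dist(x, s)` is the distance to the axis. This gives
`dist(z, s) ≥ (1 - λ) dist(x, s) ≥ (1 - λ) φ`. In the other direction
`dist(z, s_x) ≤ (1 + λ) φ`: in the cylinder case the ball factor of the capsule limits the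
axial displacement of `z` by the distances from `x` to the endpoints, which is exactly enough
to find a point of `s_x` within `(1 + λ) φ` of `z`. Dividing the two bounds gives the claim.
-/

section InnerProductSpace

variable {E : Type*} [NormedAddCommGroup E] [InnerProductSpace ℝ E] {a b v : E}

theorem norm_sq_eq_norm_sub_inner_smul_sq_add_inner_sq (hv : ‖v‖ = 1) (w : E) :
    ‖w‖ ^ 2 = ‖w - ⟪w, v⟫_ℝ • v‖ ^ 2 + ⟪w, v⟫_ℝ ^ 2 := by
  have horth : ⟪w - ⟪w, v⟫_ℝ • v, ⟪w, v⟫_ℝ • v⟫_ℝ = 0 := by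
    rw [real_inner_smul_right, inner_sub_left, real_inner_smul_left,
      real_inner_self_eq_norm_sq, hv]
    ring
  calc ‖w‖ ^ 2 = ‖(w - ⟪w, v⟫_ℝ • v) + ⟪w, v⟫_ℝ • v‖ ^ 2 := by rw [sub_add_cancel]
    _ = _ := by
      rw [norm_add_sq_real, horth, norm_smul, hv, Real.norm_eq_abs, mul_one, sq_abs]
      ring

theorem dist_add_smul_sq (hv : ‖v‖ = 1) (p : E) (t : ℝ) :
    dist p (a + t • v) ^ 2 = ‖(p - a) - ⟪p - a, v⟫_ℝ • v‖ ^ 2 + (⟪p - a, v⟫_ℝ - t) ^ 2 := by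
  have hinner : ⟪(p - a) - t • v, v⟫_ℝ = ⟪p - a, v⟫_ℝ - t := by
    rw [inner_sub_left, real_inner_smul_left, real_inner_self_eq_norm_sq, hv]
    ring
  rw [dist_eq_norm, show p - (a + t • v) = (p - a) - t • v by abel,
    norm_sq_eq_norm_sub_inner_smul_sq_add_inner_sq hv, hinner]
  congr 3
  module

theorem norm_sub_inner_smul_add_le (v w₁ w₂ : E) :
    ‖(w₁ + w₂) - ⟪w₁ + w₂, v⟫_ℝ • v‖ ≤ ‖w₁ - ⟪w₁, v⟫_ℝ • v‖ + ‖w₂ - ⟪w₂, v⟫_ℝ • v‖ := by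
  rw [inner_add_left, add_smul, add_sub_add_comm]
  exact norm_add_le _ _

theorem norm_sub_inner_smul_sub_le (v w₁ w₂ : E) :
    ‖(w₁ - w₂) - ⟪w₁ - w₂, v⟫_ℝ • v‖ ≤ ‖w₁ - ⟪w₁, v⟫_ℝ • v‖ + ‖w₂ - ⟪w₂, v⟫_ℝ • v‖ := by
  rw [inner_sub_left, sub_smul, sub_sub_sub_comm]
  exact norm_sub_le _ _

theorem norm_homothety_sub_inner_smul {lam : ℝ} (hlam : 0 ≤ lam) (v x y : E) :
    ‖(AffineMap.homothety x lam y - x) - ⟪AffineMap.homothety x lam y - x, v⟫_ℝ • v‖ =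
      lam * ‖(y - x) - ⟪y - x, v⟫_ℝ • v‖ := by
  rw [AffineMap.homothety_apply, vsub_eq_sub, vadd_eq_add, add_sub_cancel_right,
    real_inner_smul_left, mul_smul, ← smul_sub, norm_smul, Real.norm_of_nonneg hlam]

theorem segment_eq_image_add_smul (hdir : b - a = ‖b - a‖ • v) :
    segment ℝ a b = (fun t : ℝ => a + t • v) '' Icc 0 ‖b - a‖ := by
  have hline : (fun t : ℝ => a + t • v) = AffineMap.lineMap a (a + v) := by
    ext1 t
    rw [AffineMap.lineMap_apply_module', add_sub_cancel_left, add_comm]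
  rw [hline, ← segment_eq_Icc (norm_nonneg _), image_segment, AffineMap.lineMap_apply_zero,
    AffineMap.lineMap_apply_module', add_sub_cancel_left, ← hdir, sub_add_cancel]

theorem norm_sub_inner_smul_le_infDist_segment (hv : ‖v‖ = 1) (hdir : b - a = ‖b - a‖ • v)
    (p : E) : ‖(p - a) - ⟪p - a, v⟫_ℝ • v‖ ≤ infDist p (segment ℝ a b) := by
  rw [le_infDist ⟨a, left_mem_segment ℝ a b⟩, segment_eq_image_add_smul hdir]
  rintro _ ⟨t, -, rfl⟩
  rw [← sq_le_sq₀ (norm_nonneg _) dist_nonneg, dist_add_smul_sq hv]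
  exact le_add_of_nonneg_right (sq_nonneg _)

theorem infDist_segment_eq_min_or (hv : ‖v‖ = 1) (hdir : b - a = ‖b - a‖ • v) (p : E) :
    infDist p (segment ℝ a b) = min (dist p a) (dist p b) ∨
      ⟪p - a, v⟫_ℝ ∈ Icc 0 ‖b - a‖ ∧
        infDist p (segment ℝ a b) = ‖(p - a) - ⟪p - a, v⟫_ℝ • v‖ := by
  set t₀ := ⟪p - a, v⟫_ℝ
  set L := ‖b - a‖
  have hseg := segment_eq_image_add_smul hdir
  have hmem : ∀ t ∈ Icc 0 L, a + t • v ∈ segment ℝ a b := fun t ht =>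
    hseg ▸ mem_image_of_mem _ ht
  have hnearest : ∀ t₁ ∈ Icc 0 L, (∀ t ∈ Icc 0 L, (t₀ - t₁) ^ 2 ≤ (t₀ - t) ^ 2) →
      infDist p (segment ℝ a b) = dist p (a + t₁ • v) := by
    intro t₁ ht₁ hmin
    refine le_antisymm (infDist_le_dist_of_mem (hmem t₁ ht₁)) ?_
    rw [le_infDist ⟨a, left_mem_segment ℝ a b⟩, hseg]
    rintro _ ⟨t, ht, rfl⟩
    rw [← sq_le_sq₀ dist_nonneg dist_nonneg, dist_add_smul_sq hv, dist_add_smul_sq hv]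
    linarith [hmin t ht]
  have hL : 0 ≤ L := norm_nonneg _
  by_cases ht₀ : t₀ ∈ Icc 0 L
  · refine Or.inr ⟨ht₀, le_antisymm ?_ (norm_sub_inner_smul_le_infDist_segment hv hdir p)⟩
    refine (infDist_le_dist_of_mem (hmem t₀ ht₀)).trans_eq ?_
    rw [← sq_eq_sq₀ dist_nonneg (norm_nonneg _), dist_add_smul_sq hv, sub_self]
    ring
  left
  rcases lt_or_ge t₀ 0 with hneg | hnonneg
  · have h := hnearest 0 ⟨le_rfl, hL⟩ fun t ht => by nlinarith [ht.1]
    rw [zero_smul, add_zero] at h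
    have hab := h ▸ infDist_le_dist_of_mem (x := p) (right_mem_segment ℝ a b)
    rw [h, min_eq_left hab]
  · have hgt : L < t₀ := lt_of_not_ge fun h => ht₀ ⟨hnonneg, h⟩
    have h := hnearest L ⟨hL, le_rfl⟩ fun t ht => by nlinarith [ht.2]
    rw [← hdir, add_sub_cancel] at h
    have hba := h ▸ infDist_le_dist_of_mem (x := p) (left_mem_segment ℝ a b)
    rw [h, min_eq_right hba]

theorem exists_mem_Icc_sq_add_sub_sq_le {lam φ c τ p q : ℝ} (hp : 0 ≤ p) (hq : 0 ≤ q)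
    (hlam : lam ^ 2 ≤ 1) (hc : c ^ 2 ≤ lam ^ 2 * φ ^ 2)
    (hτp : c ^ 2 + τ ^ 2 ≤ lam ^ 2 * (φ ^ 2 + p ^ 2))
    (hτq : c ^ 2 + τ ^ 2 ≤ lam ^ 2 * (φ ^ 2 + q ^ 2)) :
    ∃ σ ∈ Icc (-p) q, c ^ 2 + (τ - σ) ^ 2 ≤ lam ^ 2 * φ ^ 2 := by
  -- `σ` is `τ` clamped to `[-p, q]`; outside that interval `(τ - σ) ^ 2 ≤ τ ^ 2 - σ ^ 2`.
  rcases lt_or_ge τ (-p) with hlow | hge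
  · exact ⟨-p, ⟨le_rfl, by linarith⟩, by nlinarith⟩
  rcases le_or_gt τ q with hle | hhigh
  · exact ⟨τ, ⟨hge, hle⟩, by simpa using hc⟩
  · exact ⟨q, ⟨by linarith, le_rfl⟩, by nlinarith⟩

theorem norm_sq_le_of_le_mul_max_dist (hv : ‖v‖ = 1) {p w : E} {φ lam t : ℝ}
    (hρ : ‖(p - a) - ⟪p - a, v⟫_ℝ • v‖ ≤ φ) (hw : ‖w‖ ≤ lam * max φ (dist p (a + t • v))) :
    ‖w‖ ^ 2 ≤ lam ^ 2 * (φ ^ 2 + (⟪p - a, v⟫_ℝ - t) ^ 2) := by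
  have hmax : max φ (dist p (a + t • v)) ^ 2 ≤ φ ^ 2 + (⟪p - a, v⟫_ℝ - t) ^ 2 := by
    have hdist := dist_add_smul_sq (a := a) hv p t
    rcases max_cases φ (dist p (a + t • v)) with ⟨hm, -⟩ | ⟨hm, -⟩ <;> rw [hm]
    · nlinarith [sq_nonneg (⟪p - a, v⟫_ℝ - t)]
    · nlinarith [norm_nonneg ((p - a) - ⟪p - a, v⟫_ℝ • v)]
  calc ‖w‖ ^ 2 ≤ (lam * max φ (dist p (a + t • v))) ^ 2 := pow_le_pow_left₀ (norm_nonneg _) hw 2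
    _ ≤ lam ^ 2 * (φ ^ 2 + (⟪p - a, v⟫_ℝ - t) ^ 2) := by
      rw [mul_pow]
      exact mul_le_mul_of_nonneg_left hmax (sq_nonneg lam)

theorem infDist_segment_le_of_mem_cylinder (hv : ‖v‖ = 1) (hdir : b - a = ‖b - a‖ • v)
    {p z : E} {φ lam : ℝ} (hlam₀ : 0 ≤ lam) (hlam₁ : lam ≤ 1)
    (hfoot : ⟪p - a, v⟫_ℝ ∈ Icc 0 ‖b - a‖) (hρ : ‖(p - a) - ⟪p - a, v⟫_ℝ • v‖ ≤ φ)
    (hperp : ‖(z - p) - ⟪z - p, v⟫_ℝ • v‖ ≤ lam * φ)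
    (ha : ‖z - p‖ ≤ lam * max φ (dist p a)) (hb : ‖z - p‖ ≤ lam * max φ (dist p b)) :
    infDist z (segment ℝ a b) ≤ (1 + lam) * φ := by
  set t₀ := ⟪p - a, v⟫_ℝ
  set L := ‖b - a‖
  set ρ := ‖(p - a) - t₀ • v‖
  set τ := ⟪z - p, v⟫_ℝ
  set c := ‖(z - p) - τ • v‖
  have hφ : 0 ≤ φ := (norm_nonneg _).trans hρ
  have hball : ∀ t, ‖z - p‖ ≤ lam * max φ (dist p (a + t • v)) →
      c ^ 2 + τ ^ 2 ≤ lam ^ 2 * (φ ^ 2 + (t₀ - t) ^ 2) := fun t h => by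
    rw [← norm_sq_eq_norm_sub_inner_smul_sq_add_inner_sq hv]
    exact norm_sq_le_of_le_mul_max_dist hv hρ h
  have hτa : c ^ 2 + τ ^ 2 ≤ lam ^ 2 * (φ ^ 2 + t₀ ^ 2) := by
    simpa using hball 0 (by simpa using ha)
  have hτb : c ^ 2 + τ ^ 2 ≤ lam ^ 2 * (φ ^ 2 + (L - t₀) ^ 2) := by
    rw [show (L - t₀) ^ 2 = (t₀ - L) ^ 2 by ring]
    exact hball L (by rwa [← hdir, add_sub_cancel])
  obtain ⟨σ, hσ, hσsq⟩ := exists_mem_Icc_sq_add_sub_sq_le hfoot.1 (sub_nonneg.2 hfoot.2)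
    (by nlinarith) (by nlinarith [norm_nonneg ((z - p) - τ • v)]) hτa hτb
  have hmem : a + (t₀ + σ) • v ∈ segment ℝ a b := by
    rw [segment_eq_image_add_smul hdir]
    exact mem_image_of_mem _ ⟨by linarith [hσ.1], by linarith [hσ.2]⟩
  have hza : z - a = (p - a) + (z - p) := by abel
  have hperp_za : ‖(z - a) - ⟪z - a, v⟫_ℝ • v‖ ≤ ρ + c := by
    rw [hza]
    exact norm_sub_inner_smul_add_le v _ _
  have hinner_za : ⟪z - a, v⟫_ℝ = t₀ + τ := by rw [hza, inner_add_left]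
  have hdist : dist z (a + (t₀ + σ) • v) ^ 2 ≤ ((1 + lam) * φ) ^ 2 := by
    have hsq := pow_le_pow_left₀ (norm_nonneg _) (hperp_za.trans (add_le_add_left hρ c)) 2
    rw [hinner_za] at hsq
    rw [dist_add_smul_sq hv, hinner_za]
    nlinarith [mul_le_mul_of_nonneg_left hperp hφ]
  refine (infDist_le_dist_of_mem hmem).trans ?_
  exact (sq_le_sq₀ dist_nonneg (by positivity)).1 hdist

end InnerProductSpace

section Capsule

variable {a b v x y : EuclideanSpace ℝ (Fin d)} {r lam : ℝ}

theorem infDist_sub_le_infDist_homothety_of_mem_capsuleSeg (hv : ‖v‖ = 1)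
    (hdir : b - a = ‖b - a‖ • v) (hlam : 0 ≤ lam) (hy : y ∈ capsuleSeg a b v x r) :
    infDist x (segment ℝ a b) - lam * max r (infDist x (segment ℝ a b)) ≤
      infDist (AffineMap.homothety x lam y) (segment ℝ a b) := by
  set z := AffineMap.homothety x lam y
  unfold capsuleSeg at hy
  split_ifs at hy with hend
  · have hxz : dist x z ≤ lam * max r (infDist x (segment ℝ a b)) := by
      rw [dist_center_homothety, Real.norm_of_nonneg hlam, dist_comm]
      exact mul_le_mul_of_nonneg_left (mem_closedBall.1 hy) hlam
    linarith [infDist_le_infDist_add_dist (x := x) (y := z) (s := segment ℝ a b)]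
  · obtain ⟨-, hD⟩ := (infDist_segment_eq_min_or hv hdir x).resolve_left hend
    have hzx : ‖(z - x) - ⟪z - x, v⟫_ℝ • v‖ ≤ lam * max r (infDist x (segment ℝ a b)) := by
      rw [norm_homothety_sub_inner_smul hlam]
      exact mul_le_mul_of_nonneg_left hy.1 hlam
    have htri := norm_sub_inner_smul_sub_le v (z - a) (z - x)
    rw [sub_sub_sub_cancel_left, ← hD] at htri
    linarith [norm_sub_inner_smul_le_infDist_segment hv hdir z]

theorem infDist_homothety_le_of_mem_capsuleSeg (hv : ‖v‖ = 1) (hdir : b - a = ‖b - a‖ • v)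
    (hlam₀ : 0 ≤ lam) (hlam₁ : lam ≤ 1) (hr : infDist x (segment ℝ a b) ≤ r)
    (hy : y ∈ capsuleSeg a b v x r) :
    infDist (AffineMap.homothety x lam y) (segment ℝ a b) ≤ (1 + lam) * r := by
  set z := AffineMap.homothety x lam y
  unfold capsuleSeg at hy
  split_ifs at hy with hend
  · have hzx : dist z x ≤ lam * r := by
      rw [dist_homothety_center, Real.norm_of_nonneg hlam₀, dist_comm, ← max_eq_left hr]
      exact mul_le_mul_of_nonneg_left (mem_closedBall.1 hy) hlam₀
    linarith [infDist_le_infDist_add_dist (x := z) (y := x) (s := segment ℝ a b)]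
  · obtain ⟨hfoot, hD⟩ := (infDist_segment_eq_min_or hv hdir x).resolve_left hend
    have hperp : ‖(z - x) - ⟪z - x, v⟫_ℝ • v‖ ≤ lam * r := by
      rw [norm_homothety_sub_inner_smul hlam₀, ← max_eq_left hr]
      exact mul_le_mul_of_nonneg_left hy.1 hlam₀
    have hzx : ‖z - x‖ ≤ lam * max r (min (dist x a) (dist x b)) := by
      rw [← dist_eq_norm, dist_homothety_center, Real.norm_of_nonneg hlam₀, dist_comm]
      exact mul_le_mul_of_nonneg_left (mem_closedBall.1 hy.2) hlam₀
    exact infDist_segment_le_of_mem_cylinder hv hdir hlam₀ hlam₁ hfoot (hD ▸ hr) hperp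
      (hzx.trans (by gcongr; exact min_le_left _ _))
      (hzx.trans (by gcongr; exact min_le_right _ _))

end Capsule

section LocalFeatureSize

variable {a b : Fin n → EuclideanSpace ℝ (Fin d)} {x : EuclideanSpace ℝ (Fin d)} {i j : Fin n}

theorem lfs_le_max_infDist (hij : i ≠ j) :
    lfs a b x ≤
      max (infDist x (segment ℝ (a i) (b i))) (infDist x (segment ℝ (a j) (b j))) := by
  unfold lfs
  have hbdd : BddBelow {t | ∃ i j : Fin n, i < j ∧
      t = max (infDist x (segment ℝ (a i) (b i))) (infDist x (segment ℝ (a j) (b j)))} :=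
    ⟨0, by rintro _ ⟨i, j, -, rfl⟩; exact le_max_of_le_left infDist_nonneg⟩
  rcases hij.lt_or_gt with hlt | hgt
  · exact csInf_le hbdd ⟨i, j, hlt, rfl⟩
  · rw [max_comm]
    exact csInf_le hbdd ⟨j, i, hgt, rfl⟩

theorem le_lfs {c : ℝ} (hij : i ≠ j) (h : ∀ k, c ≤ infDist x (segment ℝ (a k) (b k))) :
    c ≤ lfs a b x := by
  obtain ⟨i', j', hlt⟩ : ∃ i' j' : Fin n, i' < j' :=
    hij.lt_or_gt.elim (fun h => ⟨i, j, h⟩) fun h => ⟨j, i, h⟩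
  refine le_csInf ⟨_, i', j', hlt, rfl⟩ ?_
  rintro _ ⟨k, l, -, rfl⟩
  exact le_max_of_le_left (h k)

end LocalFeatureSize

theorem capsule_center_representative_approx_general {d n : ℕ}
    (a b v : Fin n → EuclideanSpace ℝ (Fin d))
    (hv : ∀ i, ‖v i‖ = 1)
    (hdir : ∀ i, b i - a i = ‖b i - a i‖ • v i)
    (lam : ℝ) (hlam0 : 0 < lam) (hlam1 : lam < 1)
    (x : EuclideanSpace ℝ (Fin d))
    (kx : Fin n)
    (hkx : ∀ i, Metric.infDist x (segment ℝ (a kx) (b kx)) ≤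
      Metric.infDist x (segment ℝ (a i) (b i)))
    (z : EuclideanSpace ℝ (Fin d))
    (hz : z ∈ scaleAbout x lam (capsuleFam a b v x (lfs a b x)))
    (kz : Fin n) :
    Metric.infDist z (segment ℝ (a kx) (b kx)) ≤
      ((1 + lam) / (1 - lam)) * Metric.infDist z (segment ℝ (a kz) (b kz)) := by
  obtain ⟨y, hy, rfl⟩ := hz
  rcases eq_or_ne kz kx with rfl | hne
  · exact le_mul_of_one_le_left infDist_nonneg
      ((one_le_div (sub_pos.2 hlam1)).2 (by linarith))
  have hφx : infDist x (segment ℝ (a kx) (b kx)) ≤ lfs a b x := le_lfs hne hkx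
  have hφz : lfs a b x ≤ infDist x (segment ℝ (a kz) (b kz)) :=
    (lfs_le_max_infDist hne).trans_eq (max_eq_left (hkx kz))
  have hupper := infDist_homothety_le_of_mem_capsuleSeg (hv kx) (hdir kx) hlam0.le hlam1.le
    hφx (mem_iInter.1 hy kx)
  have hlower := infDist_sub_le_infDist_homothety_of_mem_capsuleSeg (hv kz) (hdir kz) hlam0.le
    (mem_iInter.1 hy kz)
  rw [max_eq_right hφz] at hlower
  rw [div_mul_eq_mul_div, le_div_iff₀ (sub_pos.2 hlam1)]
  calc infDist (AffineMap.homothety x lam y) (segment ℝ (a kx) (b kx)) * (1 - lam)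
      ≤ (1 + lam) * lfs a b x * (1 - lam) := by gcongr
    _ ≤ (1 + lam) * ((1 - lam) * infDist x (segment ℝ (a kz) (b kz))) := by
      rw [mul_assoc, mul_comm (lfs a b x)]
      gcongr
    _ ≤ (1 + lam) * infDist (AffineMap.homothety x lam y) (segment ℝ (a kz) (b kz)) := by
      gcongr
      linarith

/-- If `s_x` is a nearest segment of `x`, then for every
`z ∈ C^λ(x, φ(x))` and any nearest segment `s_z` of `z`,
`dist(z, s_x) ≤ ((1+λ)/(1−λ))·dist(z, s_z)`. -/
theorem capsule_center_representative_approx {d n : ℕ} (hd : 1 ≤ d) (hn : 2 ≤ n)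
    (a b v : Fin n → EuclideanSpace ℝ (Fin d))
    (hab : ∀ i, a i ≠ b i)
    (hv : ∀ i, ‖v i‖ = 1)
    (hdir : ∀ i, b i - a i = ‖b i - a i‖ • v i)
    (hdisj : ∀ i j, i ≠ j → Disjoint (segment ℝ (a i) (b i)) (segment ℝ (a j) (b j)))
    (lam : ℝ) (hlam0 : 0 < lam) (hlam1 : lam < 1)
    (x : EuclideanSpace ℝ (Fin d))
    (kx : Fin n)
    (hkx : ∀ i, Metric.infDist x (segment ℝ (a kx) (b kx)) ≤
      Metric.infDist x (segment ℝ (a i) (b i)))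
    (z : EuclideanSpace ℝ (Fin d))
    (hz : z ∈ scaleAbout x lam (capsuleFam a b v x (lfs a b x)))
    (kz : Fin n)
    (hkz : ∀ i, Metric.infDist z (segment ℝ (a kz) (b kz)) ≤
      Metric.infDist z (segment ℝ (a i) (b i))) :
    Metric.infDist z (segment ℝ (a kx) (b kx)) ≤
      ((1 + lam) / (1 - lam)) * Metric.infDist z (segment ℝ (a kz) (b kz)) :=
  capsule_center_representative_approx_general a b v hv hdir lam hlam0 hlam1 x kx hkx z hz kz
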